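/- Let M be a monoidal model category and C a simple locally Reedy 2-category. If F ∈ Lax(C,M)_n is cofibrant in the Reedy model structure and for every 1-morphism z of C the canonical map δ_z : L(F_{AB}, z) → LaxL(F, z) from the classical latching object of the component diagram F_{AB} at z to the lax-latching object of F at z is a cofibration in M, then each component diagram F_{AB} : C(A,B) → M is Reedy cofibrant; in particular F is excellent. -/

import Mathlib

open CategoryTheory CategoryTheory.Limits MonoidalCategory

universe w v u v₁ u₁ v₂ u₂

noncomputable section

/-! ### Model structures -/

section ModelStructures

variable {C : Type u} [Category.{v} C]

/-- `f` is a retract of `g` in the arrow category. -/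
def IsRetractOfMaps {X Y X' Y' : C} (f : X ⟶ Y) (g : X' ⟶ Y') : Prop :=
  ∃ (iX : X ⟶ X') (rX : X' ⟶ X) (iY : Y ⟶ Y') (rY : Y' ⟶ Y),
    iX ≫ rX = 𝟙 X ∧ iY ≫ rY = 𝟙 Y ∧ iX ≫ g = f ≫ iY ∧ g ≫ rY = rX ≫ f

/-- A (Quillen) model structure on a category: three classes of maps (weak equivalences,
cofibrations, fibrations) satisfying the usual axioms (two-out-of-three, closure under
retracts, the lifting axioms and the factorization axioms). -/
structure ModelStructure (C : Type u) [Category.{v} C] : Type (max u v) where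
  W : MorphismProperty C
  Cof : MorphismProperty C
  Fib : MorphismProperty C
  W_of_isIso : ∀ {X Y : C} (f : X ⟶ Y), IsIso f → W f
  W_comp : ∀ {X Y Z : C} (f : X ⟶ Y) (g : Y ⟶ Z), W f → W g → W (f ≫ g)
  W_of_comp_left : ∀ {X Y Z : C} (f : X ⟶ Y) (g : Y ⟶ Z), W (f ≫ g) → W g → W f
  W_of_comp_right : ∀ {X Y Z : C} (f : X ⟶ Y) (g : Y ⟶ Z), W (f ≫ g) → W f → W g
  W_retract : ∀ {X Y X' Y' : C} (f : X ⟶ Y) (g : X' ⟶ Y'), IsRetractOfMaps f g → W g → W f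
  Cof_retract : ∀ {X Y X' Y' : C} (f : X ⟶ Y) (g : X' ⟶ Y'),
    IsRetractOfMaps f g → Cof g → Cof f
  Fib_retract : ∀ {X Y X' Y' : C} (f : X ⟶ Y) (g : X' ⟶ Y'),
    IsRetractOfMaps f g → Fib g → Fib f
  lift_cof_trivFib : ∀ {A B P Q : C} (i : A ⟶ B) (p : P ⟶ Q),
    Cof i → Fib p → W p → HasLiftingProperty i p
  lift_trivCof_fib : ∀ {A B P Q : C} (i : A ⟶ B) (p : P ⟶ Q),
    Cof i → W i → Fib p → HasLiftingProperty i p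
  factor_cof_trivFib : ∀ {X Y : C} (f : X ⟶ Y),
    ∃ (Z : C) (i : X ⟶ Z) (p : Z ⟶ Y), Cof i ∧ Fib p ∧ W p ∧ i ≫ p = f
  factor_trivCof_fib : ∀ {X Y : C} (f : X ⟶ Y),
    ∃ (Z : C) (i : X ⟶ Z) (p : Z ⟶ Y), Cof i ∧ W i ∧ Fib p ∧ i ≫ p = f

/-- An object is cofibrant if it has the left lifting property (for maps out of it)
against all trivial fibrations; in the presence of an initial object this is the usual
notion `Cof (⊥ ⟶ X)`. -/
def ModelStructure.CofibrantObj (m : ModelStructure C) (X : C) : Prop :=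
  ∀ {P Q : C} (p : P ⟶ Q), m.Fib p → m.W p → ∀ f : X ⟶ Q, ∃ g : X ⟶ P, g ≫ p = f

/-- A Quillen adjunction: the left adjoint preserves cofibrations and trivial cofibrations. -/
def IsQuillenAdjunction {D : Type u₁} [Category.{v₁} D]
    (mC : ModelStructure C) (mD : ModelStructure D)
    (F : C ⥤ D) (G : D ⥤ C) (_adj : F ⊣ G) : Prop :=
  (∀ {X Y : C} (f : X ⟶ Y), mC.Cof f → mD.Cof (F.map f)) ∧
  (∀ {X Y : C} (f : X ⟶ Y), mC.Cof f → mC.W f → mD.Cof (F.map f) ∧ mD.W (F.map f))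

/-- A functor `U : D ⥤ C` is right Quillen if it has a left adjoint and preserves
fibrations and trivial fibrations. -/
def IsRightQuillen {D : Type u₁} [Category.{v₁} D]
    (mD : ModelStructure D) (mC : ModelStructure C) (U : D ⥤ C) : Prop :=
  U.IsRightAdjoint ∧
  (∀ {X Y : D} (f : X ⟶ Y), mD.Fib f → mC.Fib (U.map f)) ∧
  (∀ {X Y : D} (f : X ⟶ Y), mD.Fib f → mD.W f → mC.Fib (U.map f) ∧ mC.W (U.map f))

/-- The right lifting property against a set of arrows. -/
def RlpSet (S : Set (Arrow C)) : MorphismProperty C :=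
  fun _ _ p => ∀ a ∈ S, HasLiftingProperty a.hom p

/-- `S` is a set of generating cofibrations for the model structure `m`:
the trivial fibrations are exactly the maps with the right lifting property against `S`. -/
def GeneratesCofibrations (m : ModelStructure C) (S : Set (Arrow C)) : Prop :=
  (∀ a ∈ S, m.Cof a.hom) ∧
  ∀ {X Y : C} (p : X ⟶ Y), (m.Fib p ∧ m.W p) ↔ RlpSet S p

/-- `S` is a set of generating trivial cofibrations for the model structure `m`:
the fibrations are exactly the maps with the right lifting property against `S`. -/
def GeneratesTrivialCofibrations (m : ModelStructure C) (S : Set (Arrow C)) : Prop :=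
  (∀ a ∈ S, m.Cof a.hom ∧ m.W a.hom) ∧
  ∀ {X Y : C} (p : X ⟶ Y), m.Fib p ↔ RlpSet S p

/-- A model structure is cofibrantly generated if it admits sets of generating
cofibrations and generating trivial cofibrations. -/
def IsCofibrantlyGenerated (m : ModelStructure C) : Prop :=
  ∃ (I J : Set (Arrow C)), GeneratesCofibrations m I ∧ GeneratesTrivialCofibrations m J

end ModelStructures

/-! ### Monoidal model categories -/

section MonoidalModel

variable {M : Type u} [Category.{v} M] [MonoidalCategory M]

/-- A (symmetric) monoidal model category: a model structure together with the
pushout-product axiom and the unit axiom. -/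
structure MonoidalModel (M : Type u) [Category.{v} M] [MonoidalCategory M]
    [HasColimits M] extends ModelStructure M where
  pushoutProduct : ∀ {A B P Q : M} (f : A ⟶ B) (g : P ⟶ Q) (_ : Cof f) (_ : Cof g),
    Cof (pushout.desc (f ▷ Q) (B ◁ g) (whisker_exchange f g) :
      pushout (A ◁ g) (f ▷ P) ⟶ B ⊗ Q)
  pushoutProduct_left : ∀ {A B P Q : M} (f : A ⟶ B) (g : P ⟶ Q)
    (_ : Cof f) (_ : W f) (_ : Cof g),
    W (pushout.desc (f ▷ Q) (B ◁ g) (whisker_exchange f g) :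
      pushout (A ◁ g) (f ▷ P) ⟶ B ⊗ Q)
  pushoutProduct_right : ∀ {A B P Q : M} (f : A ⟶ B) (g : P ⟶ Q)
    (_ : Cof f) (_ : Cof g) (_ : W g),
    W (pushout.desc (f ▷ Q) (B ◁ g) (whisker_exchange f g) :
      pushout (A ◁ g) (f ▷ P) ⟶ B ⊗ Q)
  unit_axiom : ∀ {Q₀ : M} (q : Q₀ ⟶ 𝟙_ M), Cof (initial.to Q₀) → W q →
    ∀ (X : M), Cof (initial.to X) → W (q ▷ X) ∧ W (X ◁ q)

end MonoidalModel

/-! ### Levelwise classes and projective structures on functor categories -/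

section Projective

variable {J : Type u₁} [Category.{v₁} J] {M : Type u} [Category.{v} M]

/-- Levelwise weak equivalences in a functor category. -/
def LvlW (m : ModelStructure M) : MorphismProperty (J ⥤ M) :=
  fun _ _ σ => ∀ j, m.W (σ.app j)

/-- Levelwise fibrations in a functor category. -/
def LvlFib (m : ModelStructure M) : MorphismProperty (J ⥤ M) :=
  fun _ _ σ => ∀ j, m.Fib (σ.app j)

/-- Projective cofibrations: maps with the left lifting property against levelwise
trivial fibrations. -/
def ProjCof (m : ModelStructure M) : MorphismProperty (J ⥤ M) :=
  fun _ _ i => ∀ {P Q : J ⥤ M} (p : P ⟶ Q), LvlFib m p → LvlW m p → HasLiftingProperty i p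

/-- A projectively cofibrant diagram: it lifts against all levelwise trivial fibrations. -/
def ProjCofibrantObj (m : ModelStructure M) (G : J ⥤ M) : Prop :=
  ∀ {P Q : J ⥤ M} (p : P ⟶ Q), LvlFib m p → LvlW m p →
    ∀ u : G ⟶ Q, ∃ v : G ⟶ P, v ≫ p = u

/-- `mJ` is the projective model structure on `J ⥤ M` over `m`: weak equivalences and
fibrations are levelwise. -/
def IsProjectiveStructure (m : ModelStructure M) (mJ : ModelStructure (J ⥤ M)) : Prop :=
  mJ.W = LvlW m ∧ mJ.Fib = LvlFib m

end Projective
/-! ### Reedy categories and latching objects -/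

section Reedy

variable {J : Type u₁} [Category.{v₁} J]

/-- A Reedy structure on a category: a degree function together with wide subcategories
of degree-raising ("direct") and degree-lowering ("inverse") morphisms, such that every
morphism factors (uniquely up to unique isomorphism) as a degree-lowering morphism
followed by a degree-raising one. -/
structure ReedyStructure (J : Type u₁) [Category.{v₁} J] : Type (max u₁ v₁) where
  deg : J → ℕ
  plus : MorphismProperty J
  minus : MorphismProperty J
  plus_id : ∀ j : J, plus (𝟙 j)
  minus_id : ∀ j : J, minus (𝟙 j)
  plus_comp : ∀ {i j k : J} (f : i ⟶ j) (g : j ⟶ k), plus f → plus g → plus (f ≫ g)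
  minus_comp : ∀ {i j k : J} (f : i ⟶ j) (g : j ⟶ k), minus f → minus g → minus (f ≫ g)
  plus_le : ∀ {i j : J} (f : i ⟶ j), plus f → deg i ≤ deg j
  minus_le : ∀ {i j : J} (f : i ⟶ j), minus f → deg j ≤ deg i
  plus_eq : ∀ {i j : J} (f : i ⟶ j), plus f → deg i = deg j → ∃ h : i = j, f = eqToHom h
  minus_eq : ∀ {i j : J} (f : i ⟶ j), minus f → deg i = deg j → ∃ h : i = j, f = eqToHom h
  fact : ∀ {i j : J} (f : i ⟶ j),
    ∃ (k : J) (g : i ⟶ k) (h : k ⟶ j), minus g ∧ plus h ∧ g ≫ h = f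
  fact_unique : ∀ {i j : J} (f : i ⟶ j) (k k' : J) (g : i ⟶ k) (h : k ⟶ j)
    (g' : i ⟶ k') (h' : k' ⟶ j), minus g → plus h → g ≫ h = f →
    minus g' → plus h' → g' ≫ h' = f →
    ∃! e : k ≅ k', g ≫ e.hom = g' ∧ e.hom ≫ h' = h

/-- A Reedy category is direct if its inverse part consists of identities only. -/
def ReedyStructure.IsDirect (R : ReedyStructure J) : Prop :=
  ∀ {i j : J} (f : i ⟶ j), R.minus f → ∃ h : i = j, f = eqToHom h

/-- The latching category of `J` at `j`: the full subcategory of `Over j` consisting of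
the non-invertible degree-raising morphisms into `j`. -/
def LatchIndex (R : ReedyStructure J) (j : J) : Type max u₁ v₁ :=
  ObjectProperty.FullSubcategory (fun f : Over j => R.plus f.hom ∧ ¬ IsIso f.hom)

instance (R : ReedyStructure J) (j : J) : Category (LatchIndex R j) :=
  ObjectProperty.FullSubcategory.category _

variable {M : Type u} [Category.{v} M]

/-- The diagram over the latching category whose colimit is the latching object. -/
def latchDiagram (R : ReedyStructure J) (F : J ⥤ M) (j : J) : LatchIndex R j ⥤ M :=
  ObjectProperty.ι _ ⋙ Over.forget j ⋙ F

variable [HasColimitsOfSize.{v₁, max u₁ v₁} M]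

/-- The latching object of `F` at `j`. -/
def latchObj (R : ReedyStructure J) (F : J ⥤ M) (j : J) : M :=
  colimit (latchDiagram R F j)

/-- The canonical cocone over the latching diagram with point `F.obj j`. -/
@[simps]
def latchCocone (R : ReedyStructure J) (F : J ⥤ M) (j : J) : Cocone (latchDiagram R F j) where
  pt := F.obj j
  ι :=
    { app := fun f => F.map f.obj.hom
      naturality := by
        intro f g φ
        change F.map φ.hom.left ≫ F.map g.obj.hom = F.map f.obj.hom ≫ 𝟙 _
        rw [Category.comp_id, ← F.map_comp, Over.w φ.hom] }

/-- The canonical latching map `L(F, j) ⟶ F(j)`. -/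
def latchMap (R : ReedyStructure J) (F : J ⥤ M) (j : J) : latchObj R F j ⟶ F.obj j :=
  colimit.desc _ (latchCocone R F j)

/-- A Reedy cofibrant diagram: all latching maps are cofibrations. -/
def ReedyCofibrantObj (m : ModelStructure M) (R : ReedyStructure J) (F : J ⥤ M) : Prop :=
  ∀ j : J, m.Cof (latchMap R F j)

end Reedy
/-! ### Relative latching maps and Reedy cofibrations -/

section ReedyCof

variable {J : Type u₁} [Category.{v₁} J] {M : Type u} [Category.{v} M]
variable [HasColimitsOfSize.{v₁, max u₁ v₁} M] [HasPushouts M]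

/-- The map induced on latching objects by a morphism of diagrams. -/
def latchNat (R : ReedyStructure J) {F G : J ⥤ M} (σ : F ⟶ G) (j : J) :
    latchObj R F j ⟶ latchObj R G j :=
  colimMap (Functor.whiskerLeft (ObjectProperty.ι _ ⋙ Over.forget j) σ)

lemma latch_square (R : ReedyStructure J) {F G : J ⥤ M} (σ : F ⟶ G) (j : J) :
    latchMap R F j ≫ σ.app j = latchNat R σ j ≫ latchMap R G j := by
  apply colimit.hom_ext
  intro f
  simp only [latchMap, latchNat, colimit.ι_desc_assoc, latchCocone_pt,
    latchCocone_ι_app, ι_colimMap_assoc, Functor.comp_obj, Functor.whiskerLeft_app,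
    colimit.ι_desc, Functor.comp_map]
  first
    | (rw [colimit.ι_desc_assoc, ι_colimMap_assoc, colimit.ι_desc]; exact σ.naturality f.obj.hom)
    | (erw [colimit.ι_desc_assoc, ι_colimMap_assoc, colimit.ι_desc]; exact σ.naturality f.obj.hom)

/-- The relative latching map `F(j) ∪_{L(F,j)} L(G,j) ⟶ G(j)` of a morphism of
diagrams. -/
def relLatchMap (R : ReedyStructure J) {F G : J ⥤ M} (σ : F ⟶ G) (j : J) :
    pushout (latchMap R F j) (latchNat R σ j) ⟶ G.obj j :=
  pushout.desc (σ.app j) (latchMap R G j) (latch_square R σ j)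

/-- Reedy cofibrations of diagrams: all relative latching maps are cofibrations. -/
def ReedyCof (m : ModelStructure M) (R : ReedyStructure J) :
    MorphismProperty (J ⥤ M) :=
  fun _ _ σ => ∀ j, m.Cof (relLatchMap R σ j)

/-- `mJ` is the Reedy model structure on `J ⥤ M`: weak equivalences are levelwise and
cofibrations are the Reedy cofibrations. -/
def IsReedyModelStructure (m : ModelStructure M) (R : ReedyStructure J)
    (mJ : ModelStructure (J ⥤ M)) : Prop :=
  mJ.W = LvlW m ∧ mJ.Cof = ReedyCof m R

end ReedyCof
/-! ### Normal lax functors from a strict 2-category to a monoidal category -/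

section TwoCat

variable (B : Type u₁) [Bicategory.{w, v₁} B] [Bicategory.Strict B]
variable (M : Type u) [Category.{v} M] [MonoidalCategory M]

/-- A normal lax functor from a strict 2-category `B` to a monoidal category `M`
(viewed as a one-object 2-category): it assigns objects of `M` to 1-cells, morphisms to
2-cells, has natural and associative laxity maps, and is normalized at identities. -/
structure NormalLax : Type (max u₁ v₁ w u v) where
  obj : ∀ {a b : B}, (a ⟶ b) → M
  map : ∀ {a b : B} {f g : a ⟶ b}, (f ⟶ g) → (obj f ⟶ obj g)
  map_id : ∀ {a b : B} (f : a ⟶ b), map (𝟙 f) = 𝟙 (obj f)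
  map_comp : ∀ {a b : B} {f g h : a ⟶ b} (η : f ⟶ g) (θ : g ⟶ h),
    map (η ≫ θ) = map η ≫ map θ
  lax : ∀ {a b c : B} (f : a ⟶ b) (g : b ⟶ c), obj f ⊗ obj g ⟶ obj (f ≫ g)
  lax_natural : ∀ {a b c : B} {f f' : a ⟶ b} {g g' : b ⟶ c} (η : f ⟶ f') (θ : g ⟶ g'),
    (map η ⊗ₘ map θ) ≫ lax f' g' = lax f g ≫ map (Bicategory.whiskerRight η g ≫ Bicategory.whiskerLeft f' θ)
  unit : ∀ a : B, obj (𝟙 a) = 𝟙_ M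
  lax_unit_left : ∀ {a b : B} (f : a ⟶ b),
    lax (𝟙 a) f ≫ eqToHom (congrArg obj (Category.id_comp f)) =
      eqToHom (by rw [unit a]) ≫ (λ_ (obj f)).hom
  lax_unit_right : ∀ {a b : B} (f : a ⟶ b),
    lax f (𝟙 b) ≫ eqToHom (congrArg obj (Category.comp_id f)) =
      eqToHom (by rw [unit b]) ≫ (ρ_ (obj f)).hom
  lax_assoc : ∀ {a b c d : B} (f : a ⟶ b) (g : b ⟶ c) (h : c ⟶ d),
    (lax f g ▷ obj h) ≫ lax (f ≫ g) h ≫ eqToHom (congrArg obj (Category.assoc f g h)) =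
      (α_ _ _ _).hom ≫ (obj f ◁ lax g h) ≫ lax f (g ≫ h)

variable {B M}

/-- Icons between normal lax functors. -/
structure NormalLaxHom (F G : NormalLax B M) : Type (max u₁ v₁ w v) where
  app : ∀ {a b : B} (f : a ⟶ b), F.obj f ⟶ G.obj f
  naturality : ∀ {a b : B} {f g : a ⟶ b} (η : f ⟶ g),
    F.map η ≫ app g = app f ≫ G.map η
  unit_compat : ∀ a : B, app (𝟙 a) = eqToHom (by rw [F.unit, G.unit])
  lax_compat : ∀ {a b c : B} (f : a ⟶ b) (g : b ⟶ c),
    F.lax f g ≫ app (f ≫ g) = (app f ⊗ₘ app g) ≫ G.lax f g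

theorem NormalLaxHom.ext' {F G : NormalLax B M} {σ τ : NormalLaxHom F G}
    (h : ∀ {a b : B} (f : a ⟶ b), σ.app f = τ.app f) : σ = τ := by
  cases σ; cases τ
  simp only [NormalLaxHom.mk.injEq]
  funext a b f
  exact h f

instance : Category (NormalLax B M) where
  Hom := NormalLaxHom
  id F :=
    { app := fun f => 𝟙 (F.obj f)
      naturality := by intros; simp
      unit_compat := by intros; simp
      lax_compat := by intros; simp }
  comp σ τ :=
    { app := fun f => σ.app f ≫ τ.app f
      naturality := by
        intro a b f g η
        rw [← Category.assoc, σ.naturality, Category.assoc, τ.naturality, Category.assoc]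
      unit_compat := by
        intro a
        show σ.app (𝟙 a) ≫ τ.app (𝟙 a) = _
        rw [σ.unit_compat, τ.unit_compat, eqToHom_trans]
      lax_compat := by
        intro a b c f g
        rw [← MonoidalCategory.tensorHom_comp_tensorHom, ← Category.assoc, σ.lax_compat,
          Category.assoc, τ.lax_compat, Category.assoc] }
  id_comp := by intros; apply NormalLaxHom.ext'; intros; simp
  comp_id := by intros; apply NormalLaxHom.ext'; intros; simp
  assoc := by intros; apply NormalLaxHom.ext'; intros; simp

end TwoCat
/-! ### The forgetful functor and locally Reedy structures -/

section TwoCat2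

variable {B : Type u₁} [Bicategory.{w, v₁} B] [Bicategory.Strict B]
variable {M : Type u} [Category.{v} M] [MonoidalCategory M]

@[simp] lemma NormalLax.comp_app {F G H : NormalLax B M} (σ : F ⟶ G) (τ : G ⟶ H)
    {a b : B} (f : a ⟶ b) :
    NormalLaxHom.app (σ ≫ τ) f = NormalLaxHom.app σ f ≫ NormalLaxHom.app τ f := rfl

/-- The component diagram of a normal lax functor at a pair of objects. -/
def NormalLax.component (F : NormalLax B M) (a b : B) : (a ⟶ b) ⥤ M where
  obj := F.obj
  map := F.map
  map_id := F.map_id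
  map_comp := F.map_comp

variable (B M)

/-- The category `K_C = ∏_{A,B} Hom[C(A,B), M]` of families of diagrams. -/
def KB := ∀ a b : B, (a ⟶ b) ⥤ M

instance : Category (KB B M) := by unfold KB; infer_instance

/-- The forgetful functor `U : Lax(C, M)_n ⟶ K_C`. -/
def laxForget : NormalLax B M ⥤ KB B M where
  obj F := fun a b => F.component a b
  map σ := fun a b =>
    { app := fun f => σ.app f
      naturality := fun _ _ η => σ.naturality η }
  map_id := by intros; rfl
  map_comp := by intros; rfl

variable {B M}

/-- Levelwise weak equivalences in `K_C`. -/
def KBW (m : ModelStructure M) : MorphismProperty (KB B M) :=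
  fun _ _ σ => ∀ (a b : B) (f : a ⟶ b), m.W ((σ a b).app f)

/-- Levelwise fibrations in `K_C`. -/
def KBFib (m : ModelStructure M) : MorphismProperty (KB B M) :=
  fun _ _ σ => ∀ (a b : B) (f : a ⟶ b), m.Fib ((σ a b).app f)

/-- `mK` is the product projective model structure on `K_C`. -/
def IsKBProjective (m : ModelStructure M) (mK : ModelStructure (KB B M)) : Prop :=
  mK.W = KBW m ∧ mK.Fib = KBFib m

/-- A locally Reedy structure on a strict 2-category: a Reedy structure on each
hom-category, with degrees additive under horizontal composition ("simple") and with
both parts stable under horizontal composition. -/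
structure LocallyReedy (B : Type u₁) [Bicategory.{w, v₁} B] [Bicategory.Strict B] :
    Type (max u₁ v₁ w) where
  R : ∀ a b : B, ReedyStructure (a ⟶ b)
  deg_hcomp : ∀ {a b c : B} (f : a ⟶ b) (g : b ⟶ c),
    (R a c).deg (f ≫ g) = (R a b).deg f + (R b c).deg g
  plus_hcomp : ∀ {a b c : B} {f f' : a ⟶ b} {g g' : b ⟶ c} (η : f ⟶ f') (θ : g ⟶ g'),
    (R a b).plus η → (R b c).plus θ →
      (R a c).plus (Bicategory.whiskerRight η g ≫ Bicategory.whiskerLeft f' θ)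
  minus_hcomp : ∀ {a b c : B} {f f' : a ⟶ b} {g g' : b ⟶ c} (η : f ⟶ f') (θ : g ⟶ g'),
    (R a b).minus η → (R b c).minus θ →
      (R a c).minus (Bicategory.whiskerRight η g ≫ Bicategory.whiskerLeft f' θ)

variable (RC : LocallyReedy B)

/-- The inverse part of a hom-category: the wide subcategory of degree-lowering
2-morphisms. -/
structure InvPart (RC : LocallyReedy B) (a b : B) : Type v₁ where
  c : a ⟶ b

instance (a b : B) : Category (InvPart RC a b) where
  Hom f g := { η : f.c ⟶ g.c // (RC.R a b).minus η }
  id f := ⟨𝟙 f.c, (RC.R a b).minus_id f.c⟩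
  comp η θ := ⟨η.1 ≫ θ.1, (RC.R a b).minus_comp _ _ η.2 θ.2⟩
  id_comp := by intros; apply Subtype.ext; simp
  comp_id := by intros; apply Subtype.ext; simp
  assoc := by intros; apply Subtype.ext; simp

/-- The horizontal composition functor restricted to the inverse parts. -/
def invComp (a b c : B) : InvPart RC a b × InvPart RC b c ⥤ InvPart RC a c where
  obj p := ⟨p.1.c ≫ p.2.c⟩
  map {p q} η := ⟨Bicategory.whiskerRight η.1.1 p.2.c ≫
      Bicategory.whiskerLeft q.1.c η.2.1,
    RC.minus_hcomp _ _ η.1.2 η.2.2⟩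
  map_id := by
    intro p
    apply Subtype.ext
    simp [CategoryStruct.id]
  map_comp := by
    intro p q r η θ
    apply Subtype.ext
    simp [CategoryStruct.comp, Bicategory.whisker_exchange_assoc]

/-- Inverse divisibility: all the composition functors between the inverse parts are
Grothendieck fibrations. -/
def LocallyReedy.IsInverseDivisible (RC : LocallyReedy B) : Prop :=
  ∀ a b c : B, (invComp RC a b c).IsFibered

/-- A locally Reedy 2-category is totally direct if every 2-morphism is degree-raising
and the inverse parts are trivial. -/
def LocallyReedy.IsTotallyDirect (RC : LocallyReedy B) : Prop :=
  ∀ a b : B, (∀ {f g : a ⟶ b} (η : f ⟶ g), (RC.R a b).plus η) ∧ (RC.R a b).IsDirect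

variable [HasColimitsOfSize.{w, max v₁ w} M] [HasPushouts M]

/-- `mK` is the product Reedy model structure on `K_C`. -/
def IsKBReedy (m : ModelStructure M) (RC : LocallyReedy B)
    (mK : ModelStructure (KB B M)) : Prop :=
  mK.W = KBW m ∧
  mK.Cof = fun _ _ σ => ∀ a b : B, ReedyCof m (RC.R a b) (σ a b)

/-- `U(F)` is cofibrant in the product Reedy structure: each component diagram is Reedy
cofibrant. -/
def UCofibrantB (m : ModelStructure M) (RC : LocallyReedy B) (F : NormalLax B M) : Prop :=
  ∀ a b : B, ReedyCofibrantObj m (RC.R a b) (F.component a b)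

/-- Levelwise weak equivalences of normal lax functors. -/
def LaxBW (m : ModelStructure M) : MorphismProperty (NormalLax B M) :=
  fun _ _ σ => ∀ {a b : B} (f : a ⟶ b), m.W (σ.app f)

/-- An excellent lax diagram: one admitting a levelwise weak equivalence to a
`U`-cofibrant one. -/
def ExcellentB (m : ModelStructure M) (RC : LocallyReedy B) (F : NormalLax B M) : Prop :=
  ∃ (G : NormalLax B M) (σ : F ⟶ G), LaxBW m σ ∧ UCofibrantB m RC G

/-- The lax-latching data of a normal lax functor: for each 1-morphism `z` the
lax-latching object `LaxL(F,z)` with its canonical map to `F(z)` and the comparison map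
`δ_z` from the classical latching object, factoring the classical latching map. -/
structure LaxLatchData (RC : LocallyReedy B) (F : NormalLax B M) where
  laxLatch : ∀ {a b : B} (z : a ⟶ b), M
  toObj : ∀ {a b : B} (z : a ⟶ b), laxLatch z ⟶ F.obj z
  δ : ∀ {a b : B} (z : a ⟶ b), latchObj (RC.R a b) (F.component a b) z ⟶ laxLatch z
  fact : ∀ {a b : B} (z : a ⟶ b),
    δ z ≫ toObj z = latchMap (RC.R a b) (F.component a b) z

end TwoCat2
/-! ### Statement: a Reedy cofibrant lax diagram whose comparison maps
`δ_z : L(F_{AB}, z) → LaxL(F, z)` are cofibrations has Reedy cofibrant components, and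
is in particular excellent. -/

/-- Cofibrations in a model structure are closed under composition (retract argument). -/
lemma ModelStructure.Cof_comp {C : Type u} [Category.{v} C] (m : ModelStructure C)
    {X Y Z : C} (f : X ⟶ Y) (g : Y ⟶ Z) (hf : m.Cof f) (hg : m.Cof g) :
    m.Cof (f ≫ g) := by
  obtain ⟨W', i, p, hi, hp, hpw, hip⟩ := m.factor_cof_trivFib (f ≫ g)
  haveI h1 : HasLiftingProperty f p := m.lift_cof_trivFib f p hf hp hpw
  haveI h2 : HasLiftingProperty g p := m.lift_cof_trivFib g p hg hp hpw
  haveI h3 : HasLiftingProperty (f ≫ g) p := inferInstance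
  have sq : CommSq i (f ≫ g) p (𝟙 Z) := ⟨by simp [hip]⟩
  obtain ⟨⟨ℓ⟩⟩ := h3.sq_hasLift sq
  apply m.Cof_retract (f ≫ g) i _ hi
  exact ⟨𝟙 X, 𝟙 X, ℓ.l, p, by simp, ℓ.fac_right, by simpa using ℓ.fac_left.symm,
    by simpa using hip⟩

theorem uCofibrant_of_cofibrant_of_delta_cofibration
    {B : Type u₁} [Bicategory.{w, v₁} B] [Bicategory.Strict B]
    {M : Type u} [Category.{v} M] [MonoidalCategory M]
    [HasLimits M] [HasColimits M] [HasColimitsOfSize.{w, max v₁ w} M] [HasPushouts M]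
    (m : MonoidalModel M)
    (RC : LocallyReedy B) (F : NormalLax B M)
    (D : LaxLatchData RC F)
    -- `F` is Reedy cofibrant in `Lax(C,M)_n`: the canonical maps
    -- `LaxL(F,z) ⟶ F(z)` are cofibrations
    (hF : ∀ {a b : B} (z : a ⟶ b), m.Cof (D.toObj z))
    (hδ : ∀ {a b : B} (z : a ⟶ b), m.Cof (D.δ z)) :
    UCofibrantB m.toModelStructure RC F ∧ ExcellentB m.toModelStructure RC F := by
  have hU : UCofibrantB m.toModelStructure RC F := by
    intro a b z
    rw [← D.fact z]
    exact m.toModelStructure.Cof_comp _ _ (hδ z) (hF z)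
  refine ⟨hU, F, 𝟙 F, ?_, hU⟩
  intro a b f
  exact m.W_of_isIso _ (by exact inferInstanceAs (IsIso (𝟙 (F.obj f))))
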